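/- Let 2 ≤ s ≤ d, N ∈ ℕ, m ∈ ℕ, n_q ≤ m − 1, and let ξ_1,…,ξ_m ∈ ℝ^d and B > 0 satisfy |ξ_k · x| ≤ B for all x ∈ Ω ⊆ 𝔹 and all k. Let h^(0)(x) = ((ξ_k·x)_{k=1}^m) + B·𝟏 ∈ ℝ^m. Then there exist p = ⌈(2N+3)m/(s−1)⌉ filters u^(1),…,u^(p) each supported in {0,…,s} and bias vectors b^(1),…,b^(p) (each b^(j) for j < p having entries s+1 through m+(j−1)s all equal) such that the composition g(x) = σ(T^{u^(p)}(⋯σ(T^{u^(1)} h^(0)(x) − b^(1))⋯) − b^(p)) ∈ ℝ^{m+ps} satisfies: its ((j−1)m + k)-th component equals σ(ξ_k·x − t_j) for 1 ≤ k ≤ n_q and 1 ≤ j ≤ 2N+3, and equals 0 for all other indices, where t_j = −1 + (j−2)/N. -/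

import Mathlib

open Finset

/-- ReLU activation. -/
noncomputable def relu (u : ℝ) : ℝ := max u 0

/-- ceiling of `m / n` for natural numbers. -/
def ceilDiv' (m n : ℕ) : ℕ := (m + n - 1) / n

/-- A filter (sequence on ℤ) is supported in `{0, …, s}`. -/
def FilterSupp (s : ℕ) (w : ℤ → ℝ) : Prop :=
  ∀ k : ℤ, (k < 0 ∨ (s : ℤ) < k) → w k = 0

/-- A stack of convolutional ReLU layers with input width `D` and widths `D + j·s`. -/
noncomputable def convStack (s D : ℕ) (u : ℕ → ℤ → ℝ) (b : ℕ → ℕ → ℝ)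
    (v : ℕ → ℝ) : ℕ → ℕ → ℝ
  | 0 => v
  | j + 1 => fun i =>
      relu ((∑ k ∈ Finset.range (D + j * s),
          u (j + 1) ((i : ℤ) - (k : ℤ)) * convStack s D u b v j k) - b (j + 1) i)

/-- The knots `t_j = -1 + (j-2)/N` (with `j` 1-based). -/
noncomputable def knot (N j : ℕ) : ℝ := -1 + ((j : ℝ) - 2) / (N : ℝ)

/-!
The comb polynomial `P = ∑_{r < 2N+3} X^(r m)` turns the input `h⁽⁰⁾ ∈ ℝ^m`, by convolution,
into `2N+3` consecutive copies of itself. Composing convolutions multiplies the filters as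
polynomials, and over `ℝ` the polynomial `P` is a product of irreducible factors of degree at
most `2`; grouping them greedily gives `⌈(2N+3)m/(s-1)⌉` filters of degree at most `s` whose
product is `P`. In every layer but the last, a constant bias exceeding all pre-activations in
absolute value keeps the ReLU in its linear regime, at the price of an offset that does not
depend on `x`. The bias of the last layer removes this offset and subtracts `B + t_j` on the
wanted entries and a constant larger than every pre-activation on all the others.
-/

open Polynomial

namespace Polynomial

section Semiring

variable {R : Type*} [Semiring R]

noncomputable def ofCoeffs (D : ℕ) (v : ℕ → R) : R[X] :=
  ∑ k ∈ range D, C (v k) * X ^ k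

theorem coeff_ofCoeffs (D : ℕ) (v : ℕ → R) (i : ℕ) :
    (ofCoeffs D v).coeff i = if i < D then v i else 0 := by
  simp [ofCoeffs, finsetSum_coeff]

theorem natDegree_ofCoeffs_lt {D : ℕ} (hD : 0 < D) (v : ℕ → R) :
    (ofCoeffs D v).natDegree < D := by
  refine Nat.lt_of_le_pred hD (natDegree_sum_le_of_forall_le _ _ fun k hk => ?_)
  exact (natDegree_C_mul_X_pow_le _ _).trans (Nat.le_pred_of_lt (mem_range.mp hk))

theorem ofCoeffs_eq {D : ℕ} {v : ℕ → R} {p : R[X]} (hp : p.natDegree < D)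
    (hv : ∀ i < D, v i = p.coeff i) : ofCoeffs D v = p := by
  rw [as_sum_range_C_mul_X_pow' p hp]
  exact sum_congr rfl fun i hi => by rw [hv i (mem_range.mp hi)]

noncomputable def intCoeff (q : R[X]) (z : ℤ) : R :=
  if 0 ≤ z then q.coeff z.toNat else 0

theorem filterSupp_intCoeff {q : ℝ[X]} {s : ℕ} (hq : q.natDegree ≤ s) :
    FilterSupp s (intCoeff q) := by
  rintro k (hk | hk)
  · simp [intCoeff, not_le.mpr hk]
  · rw [intCoeff, if_pos (by omega), coeff_eq_zero_of_natDegree_lt (by omega)]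

theorem intCoeff_natCast_sub (q : R[X]) (i k : ℕ) :
    intCoeff q ((i : ℤ) - k) = if k ≤ i then q.coeff (i - k) else 0 := by
  unfold intCoeff
  split_ifs <;> first | omega | rfl | congr 1; omega

theorem sum_intCoeff_mul (q : R[X]) (D : ℕ) (v : ℕ → R) (i : ℕ) :
    ∑ k ∈ range D, intCoeff q ((i : ℤ) - k) * v k = (q * ofCoeffs D v).coeff i := by
  simp only [ofCoeffs, mul_sum, finsetSum_coeff, ← mul_assoc, coeff_mul_X_pow', coeff_mul_C,
    intCoeff_natCast_sub]
  exact sum_congr rfl fun k _ => by split_ifs <;> simp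

noncomputable def comb (Q m : ℕ) : R[X] :=
  ∑ r ∈ range Q, X ^ (r * m)

theorem coeff_comb_mul {Q m r k : ℕ} (hr : r < Q) (hk : k < m) {p : R[X]}
    (hp : p.natDegree < m) : (comb Q m * p).coeff (r * m + k) = p.coeff k := by
  simp only [comb, sum_mul, finsetSum_coeff, coeff_X_pow_mul']
  rw [sum_eq_single_of_mem r (mem_range.mpr hr), if_pos (by omega), Nat.add_sub_cancel_left]
  intro r' _ hr'
  split_ifs with h
  · refine coeff_eq_zero_of_natDegree_lt (lt_of_lt_of_le hp ?_)
    rcases lt_or_gt_of_ne hr' with hlt | hgt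
    · have : r' * m + m ≤ r * m := by nlinarith
      omega
    · have : r * m + m ≤ r' * m := by nlinarith
      omega
  · rfl

theorem natDegree_comb_le (Q m : ℕ) : (comb Q m : R[X]).natDegree ≤ (Q - 1) * m :=
  natDegree_sum_le_of_forall_le _ _ fun r hr =>
    (natDegree_X_pow_le _).trans (Nat.mul_le_mul_right m (by have := mem_range.mp hr; omega))

theorem comb_ne_zero [CharZero R] {Q : ℕ} (hQ : 0 < Q) (m : ℕ) :
    (comb Q m : R[X]) ≠ 0 := by
  intro h
  have := congrArg (eval 1) h
  simp only [comb, eval_finsetSum, eval_X_pow, one_pow, sum_const, card_range, nsmul_eq_mul,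
    mul_one, eval_zero, Nat.cast_eq_zero] at this
  omega

end Semiring

section Ordered

variable {R : Type*} [CommRing R] [LinearOrder R] [IsStrictOrderedRing R]

noncomputable def l1Norm (q : R[X]) : R :=
  ∑ n ∈ range (q.natDegree + 1), |q.coeff n|

theorem l1Norm_nonneg (q : R[X]) : 0 ≤ l1Norm q :=
  sum_nonneg fun _ _ => abs_nonneg _

theorem abs_coeff_le_l1Norm (q : R[X]) (n : ℕ) : |q.coeff n| ≤ l1Norm q := by
  by_cases hn : n ≤ q.natDegree
  · exact single_le_sum (f := fun n => |q.coeff n|) (fun _ _ => abs_nonneg _)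
      (mem_range.mpr (Nat.lt_succ_of_le hn))
  · rw [coeff_eq_zero_of_natDegree_lt (not_le.mp hn), abs_zero]
    exact l1Norm_nonneg q

theorem abs_coeff_mul_le (q : R[X]) {p : R[X]} {S : R} (hp : ∀ k, |p.coeff k| ≤ S) (n : ℕ) :
    |(q * p).coeff n| ≤ l1Norm q * S := by
  have hS : 0 ≤ S := (abs_nonneg _).trans (hp 0)
  have hshift : ∀ a, |(X ^ a * p).coeff n| ≤ S := fun a => by
    rw [coeff_X_pow_mul']
    split_ifs
    exacts [hp _, by simpa using hS]
  conv_lhs => rw [q.as_sum_range_C_mul_X_pow]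
  rw [l1Norm, sum_mul, sum_mul, finsetSum_coeff]
  refine (abs_sum_le_sum_abs _ _).trans (sum_le_sum fun a _ => ?_)
  rw [mul_assoc, coeff_C_mul, abs_mul]
  exact mul_le_mul_of_nonneg_left (hshift a) (abs_nonneg _)

end Ordered

theorem exists_regrouping {R : Type*} [Semiring R] [Nontrivial R] [NoZeroDivisors R] {s : ℕ}
    (hs : 2 ≤ s) :
    ∀ l : List R[X], (∀ q ∈ l, q ≠ 0 ∧ q.natDegree ≤ 2) → ∀ a : R[X], a ≠ 0 → a.natDegree ≤ s →
      ∃ L : List R[X], (∀ r ∈ L, r.natDegree ≤ s) ∧ L.prod = a * l.prod ∧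
        (s - 1) * L.length ≤ (a * l.prod).natDegree + (s - 1)
  | [], _, a, _, has => ⟨[a], by simpa using has, by simp, by simp⟩
  | q :: t, hl, a, ha, has => by
    obtain ⟨hq, hqs⟩ := hl q List.mem_cons_self
    have ht : ∀ r ∈ t, r ≠ 0 ∧ r.natDegree ≤ 2 := fun r hr => hl r (List.mem_cons_of_mem q hr)
    have htprod : q * t.prod ≠ 0 :=
      mul_ne_zero hq (List.prod_ne_zero fun h0 => (ht 0 h0).1 rfl)
    rw [List.prod_cons]
    by_cases hmerge : a.natDegree + q.natDegree ≤ s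
    · obtain ⟨L, hLs, hLprod, hLlen⟩ :=
        exists_regrouping hs t ht (a * q) (mul_ne_zero ha hq) (by rwa [natDegree_mul ha hq])
      rw [mul_assoc] at hLprod hLlen
      exact ⟨L, hLs, hLprod, hLlen⟩
    · -- `a` is closed off as a chunk: its degree is at least `s - 1` since `q` has degree `≤ 2`
      obtain ⟨L, hLs, hLprod, hLlen⟩ := exists_regrouping hs t ht q hq (hqs.trans hs)
      refine ⟨a :: L, ?_, by rw [List.prod_cons, hLprod], ?_⟩
      · simpa [has] using hLs
      · rw [List.length_cons, natDegree_mul ha htprod]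
        have : (s - 1) * (L.length + 1) = (s - 1) * L.length + (s - 1) := by ring
        omega

theorem exists_factors_natDegree_le_two {f : ℝ[X]} (hf : f ≠ 0) :
    ∃ l : List ℝ[X], (∀ q ∈ l, q ≠ 0 ∧ q.natDegree ≤ 2) ∧ l.prod = f := by
  obtain ⟨c, hc⟩ := UniqueFactorizationMonoid.factors_prod hf
  refine ⟨(c : ℝ[X]) :: (UniqueFactorizationMonoid.factors f).toList, ?_, ?_⟩
  · intro q hq
    rcases List.mem_cons.mp hq with rfl | hq
    · exact ⟨c.ne_zero, (natDegree_eq_zero_of_isUnit c.isUnit).trans_le (by norm_num)⟩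
    · have hirr := UniqueFactorizationMonoid.irreducible_of_factor q (Multiset.mem_toList.mp hq)
      exact ⟨hirr.ne_zero, hirr.natDegree_le_two⟩
  · rw [List.prod_cons, Multiset.prod_toList, mul_comm, hc]

end Polynomial

theorem List.prod_range_getD {M : Type*} [CommMonoid M] :
    ∀ (L : List M) {p : ℕ}, L.length ≤ p → ∏ t ∈ Finset.range p, L.getD t 1 = L.prod
  | [], p, _ => by simp
  | q :: L, p + 1, h => by
    rw [Finset.prod_range_succ', List.prod_cons, mul_comm]
    simp only [List.getD_cons_zero, List.getD_cons_succ,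
      List.prod_range_getD L (Nat.le_of_succ_le_succ h)]

theorem le_ceilDiv'_mul (n : ℕ) {k : ℕ} (hk : 0 < k) : n ≤ ceilDiv' n k * k := by
  have := Nat.div_add_mod (n + k - 1) k
  have := Nat.mod_lt (n + k - 1) hk
  rw [ceilDiv', mul_comm]
  omega

theorem relu_of_nonneg {x : ℝ} (h : 0 ≤ x) : relu x = x := max_eq_left h

theorem relu_of_nonpos {x : ℝ} (h : x ≤ 0) : relu x = 0 := max_eq_right h

section LinearRegime

variable (s D : ℕ) (M : ℝ) (w : ℕ → ℝ[X])

noncomputable def layerProd (j : ℕ) : ℝ[X] :=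
  ∏ t ∈ range j, w (t + 1)

noncomputable def layerOffset : ℕ → ℝ[X]
  | 0 => 0
  | j + 1 => w (j + 1) * layerOffset j +
      C (l1Norm (layerProd w (j + 1)) * M + l1Norm (w (j + 1)) * l1Norm (layerOffset j)) *
        ofCoeffs (D + (j + 1) * s) fun _ => 1

/-- Bounds the pre-activations of layer `j + 1` in absolute value (`relu_coeff_add_layerShift`),
so that adding it puts that layer's ReLU in its linear regime. -/
noncomputable def layerShift (j : ℕ) : ℝ :=
  l1Norm (layerProd w (j + 1)) * M + l1Norm (w (j + 1)) * l1Norm (layerOffset s D M w j)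

theorem layerProd_succ (j : ℕ) : layerProd w (j + 1) = layerProd w j * w (j + 1) :=
  prod_range_succ _ _

theorem layerOffset_succ (j : ℕ) :
    layerOffset s D M w (j + 1) =
      w (j + 1) * layerOffset s D M w j +
        C (layerShift s D M w j) * ofCoeffs (D + (j + 1) * s) fun _ => 1 :=
  rfl

variable {s D M w}

theorem natDegree_layerProd_le (hw : ∀ j, (w j).natDegree ≤ s) (j : ℕ) :
    (layerProd w j).natDegree ≤ j * s :=
  (natDegree_prod_le _ _).trans <| by
    simpa using sum_le_sum fun t (_ : t ∈ range j) => hw (t + 1)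

theorem natDegree_layerOffset_lt (hD : 0 < D) (hw : ∀ j, (w j).natDegree ≤ s) :
    ∀ j, (layerOffset s D M w j).natDegree < D + j * s
  | 0 => by simpa [layerOffset] using hD
  | j + 1 => by
    rw [layerOffset_succ]
    refine (natDegree_add_le _ _).trans_lt (max_lt ?_ ?_)
    · refine (natDegree_mul_le).trans_lt ?_
      have := natDegree_layerOffset_lt hD hw j
      have := hw (j + 1)
      rw [add_one_mul]
      omega
    · exact (natDegree_C_mul_le _ _).trans_lt (natDegree_ofCoeffs_lt (by omega) _)

theorem natDegree_layerOutput_lt (hD : 0 < D) (hw : ∀ j, (w j).natDegree ≤ s) {V : ℝ[X]}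
    (hV : V.natDegree < D) (j : ℕ) :
    (layerProd w j * V + layerOffset s D M w j).natDegree < D + j * s := by
  refine (natDegree_add_le _ _).trans_lt (max_lt ?_ (natDegree_layerOffset_lt hD hw j))
  have := natDegree_layerProd_le hw j
  exact natDegree_mul_le.trans_lt (by omega)

theorem relu_coeff_add_layerShift {V : ℝ[X]} (hVM : ∀ k, |V.coeff k| ≤ M) {j i : ℕ}
    (hi : i < D + (j + 1) * s) :
    relu ((w (j + 1) * (layerProd w j * V + layerOffset s D M w j)).coeff i +
        layerShift s D M w j) =
      (layerProd w (j + 1) * V + layerOffset s D M w (j + 1)).coeff i := by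
  have hsplit : w (j + 1) * (layerProd w j * V + layerOffset s D M w j) =
      layerProd w (j + 1) * V + w (j + 1) * layerOffset s D M w j := by
    rw [layerProd_succ]
    ring
  have hbound : |(layerProd w (j + 1) * V).coeff i| +
      |(w (j + 1) * layerOffset s D M w j).coeff i| ≤ layerShift s D M w j :=
    add_le_add (abs_coeff_mul_le _ hVM i) (abs_coeff_mul_le _ (abs_coeff_le_l1Norm _) i)
  rw [hsplit, relu_of_nonneg, layerOffset_succ, coeff_add, coeff_add, coeff_add, coeff_C_mul,
    coeff_ofCoeffs, if_pos hi, mul_one]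
  · ring
  · rw [coeff_add]
    linarith [neg_abs_le ((layerProd w (j + 1) * V).coeff i),
      neg_abs_le ((w (j + 1) * layerOffset s D M w j).coeff i)]

theorem convStack_succ_intCoeff (b : ℕ → ℕ → ℝ) (v : ℕ → ℝ) (j i : ℕ) :
    convStack s D (fun j => intCoeff (w j)) b v (j + 1) i =
      relu ((w (j + 1) *
        ofCoeffs (D + j * s) (convStack s D (fun j => intCoeff (w j)) b v j)).coeff i -
          b (j + 1) i) := by
  rw [← sum_intCoeff_mul]
  rfl

theorem convStack_eq_coeff (hD : 0 < D) (hw : ∀ j, (w j).natDegree ≤ s) {V : ℝ[X]}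
    (hV : V.natDegree < D) (hVM : ∀ k, |V.coeff k| ≤ M) {b : ℕ → ℕ → ℝ} :
    ∀ j, (∀ l < j, ∀ i, b (l + 1) i = -layerShift s D M w l) →
      ∀ i < D + j * s, convStack s D (fun j => intCoeff (w j)) b V.coeff j i =
        (layerProd w j * V + layerOffset s D M w j).coeff i
  | 0, _, i, _ => by simp [convStack, layerProd, layerOffset]
  | j + 1, hb, i, hi => by
    have hprev := convStack_eq_coeff hD hw hV hVM j (fun l hl => hb l (by omega))
    rw [convStack_succ_intCoeff, ofCoeffs_eq (natDegree_layerOutput_lt hD hw hV j) hprev,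
      hb j (by omega), sub_neg_eq_add, relu_coeff_add_layerShift hVM hi]

variable (s D M w)

noncomputable def stackBias (p : ℕ) (β : ℕ → ℝ) (j i : ℕ) : ℝ :=
  if j = p then (w p * layerOffset s D M w (p - 1)).coeff i + β i else -layerShift s D M w (j - 1)

variable {s D M w}

theorem convStack_stackBias (hD : 0 < D) (hw : ∀ j, (w j).natDegree ≤ s) {V : ℝ[X]}
    (hV : V.natDegree < D) (hVM : ∀ k, |V.coeff k| ≤ M) {p : ℕ} (hp : 0 < p) (β : ℕ → ℝ)
    (i : ℕ) :
    convStack s D (fun j => intCoeff (w j)) (stackBias s D M w p β) V.coeff p i =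
      relu ((layerProd w p * V).coeff i - β i) := by
  obtain ⟨j, rfl⟩ : ∃ j, p = j + 1 := ⟨p - 1, by omega⟩
  have hb : ∀ l < j, ∀ i, stackBias s D M w (j + 1) β (l + 1) i = -layerShift s D M w l :=
    fun l hl i => by simp [stackBias, show l ≠ j by omega]
  rw [convStack_succ_intCoeff, ofCoeffs_eq (natDegree_layerOutput_lt hD hw hV j)
    (convStack_eq_coeff hD hw hV hVM j hb)]
  simp only [stackBias, if_pos, Nat.add_sub_cancel, mul_add, coeff_add, layerProd_succ]
  rw [show w (j + 1) * (layerProd w j * V) = layerProd w j * w (j + 1) * V by ring]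
  congr 1
  ring

end LinearRegime

theorem exists_layerProd_eq {s p : ℕ} (hs : 2 ≤ s) {f : ℝ[X]} (hf : f ≠ 0)
    (hfp : f.natDegree < p * (s - 1)) :
    ∃ w : ℕ → ℝ[X], (∀ j, (w j).natDegree ≤ s) ∧ layerProd w p = f := by
  obtain ⟨l, hl, hlprod⟩ := exists_factors_natDegree_le_two hf
  obtain ⟨L, hLs, hLprod, hLlen⟩ := exists_regrouping hs l hl 1 one_ne_zero (by simp)
  rw [one_mul, hlprod] at hLprod hLlen
  have hlen : L.length ≤ p := by
    by_contra! h
    have : (s - 1) * (p + 1) ≤ (s - 1) * L.length := Nat.mul_le_mul_left _ h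
    nlinarith
  refine ⟨fun j => L.getD (j - 1) 1, fun j => ?_, ?_⟩
  · show (L.getD (j - 1) 1).natDegree ≤ s
    rcases lt_or_ge (j - 1) L.length with h | h
    · exact List.getD_eq_getElem L 1 h ▸ hLs _ (List.getElem_mem h)
    · rw [List.getD_eq_default L 1 h, natDegree_one]
      exact Nat.zero_le s
  · simpa [layerProd, hLprod] using List.prod_range_getD L hlen

theorem exists_input_poly {m : ℕ} (hm : 0 < m) {B : ℝ} (hB : 0 ≤ B) {a : ℕ → ℝ}
    (ha : ∀ k < m, |a k| ≤ B) :
    ∃ V : ℝ[X], V.natDegree < m ∧ (fun k => if k < m then a k + B else 0) = V.coeff ∧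
      ∀ k, |V.coeff k| ≤ 2 * B := by
  refine ⟨ofCoeffs m fun k => a k + B, natDegree_ofCoeffs_lt hm _,
    funext fun k => by rw [coeff_ofCoeffs], fun k => ?_⟩
  rw [coeff_ofCoeffs]
  split_ifs with hk
  · obtain ⟨h1, h2⟩ := abs_le.mp (ha k hk)
    exact abs_le.mpr ⟨by linarith, by linarith⟩
  · simpa using hB

open Classical in
noncomputable def ridgeThreshold (N Q m nq : ℕ) (B C : ℝ) (i : ℕ) : ℝ :=
  if ∃ j k, 1 ≤ j ∧ j ≤ Q ∧ k < nq ∧ i = (j - 1) * m + k then B + knot N (i / m + 1) else C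

theorem ridgeThreshold_of_target {N Q m nq j k : ℕ} (B C : ℝ) (hj : 1 ≤ j) (hjQ : j ≤ Q)
    (hk : k < nq) (hkm : k < m) : ridgeThreshold N Q m nq B C ((j - 1) * m + k) = B + knot N j := by
  rw [ridgeThreshold, if_pos ⟨j, k, hj, hjQ, hk, rfl⟩, add_comm ((j - 1) * m),
    Nat.add_mul_div_right _ _ (by omega), Nat.div_eq_of_lt hkm, zero_add, Nat.sub_add_cancel hj]

theorem ridgeThreshold_of_not_target {N Q m nq i : ℕ} (B C : ℝ)
    (hi : ¬ ∃ j k, 1 ≤ j ∧ j ≤ Q ∧ k < nq ∧ i = (j - 1) * m + k) :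
    ridgeThreshold N Q m nq B C i = C := by
  rw [ridgeThreshold, if_neg hi]

theorem dcnn_ridge_functions_general
    (d s N m nq : ℕ) (hs : 2 ≤ s)
    (hnq : nq ≤ m - 1) (hm : 1 ≤ m)
    (Ω : Set (EuclideanSpace ℝ (Fin d)))
    (ξ : ℕ → EuclideanSpace ℝ (Fin d)) (B : ℝ) (hB : 0 < B)
    (hbd : ∀ k < m, ∀ x ∈ Ω, |∑ i, ξ k i * x i| ≤ B) :
    ∃ (u : ℕ → ℤ → ℝ) (b : ℕ → ℕ → ℝ),
      (∀ j, FilterSupp s (u j)) ∧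
      (∀ j, 1 ≤ j → j < ceilDiv' ((2 * N + 3) * m) (s - 1) →
        ∀ i1 i2, s ≤ i1 → i1 < m + (j - 1) * s → s ≤ i2 → i2 < m + (j - 1) * s →
          b j i1 = b j i2) ∧
      ∀ x ∈ Ω,
        (∀ j, 1 ≤ j → j ≤ 2 * N + 3 → ∀ k < nq,
          convStack s m u b
              (fun k' => if k' < m then (∑ i, ξ k' i * x i) + B else 0)
              (ceilDiv' ((2 * N + 3) * m) (s - 1)) ((j - 1) * m + k) =
            relu ((∑ i, ξ k i * x i) - knot N j)) ∧
        (∀ i' < m + ceilDiv' ((2 * N + 3) * m) (s - 1) * s,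
          (¬ ∃ j k, 1 ≤ j ∧ j ≤ 2 * N + 3 ∧ k < nq ∧ i' = (j - 1) * m + k) →
            convStack s m u b
                (fun k' => if k' < m then (∑ i, ξ k' i * x i) + B else 0)
                (ceilDiv' ((2 * N + 3) * m) (s - 1)) i' = 0) := by
  set Q := 2 * N + 3
  set p := ceilDiv' (Q * m) (s - 1)
  have hQm : Q * m ≤ p * (s - 1) := le_ceilDiv'_mul _ (by omega)
  have hp : 0 < p := Nat.pos_of_ne_zero fun hp => by
    rw [hp, zero_mul] at hQm
    exact (Nat.mul_pos (by omega) hm).not_ge hQm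
  obtain ⟨w, hw, hwp⟩ := exists_layerProd_eq hs (comb_ne_zero (R := ℝ) (Q := Q) (by omega) m)
    ((natDegree_comb_le Q m).trans_lt ((Nat.mul_lt_mul_of_pos_right (by omega) hm).trans_le hQm))
  set C := l1Norm (comb Q m : ℝ[X]) * (2 * B) + 1
  refine ⟨fun j => intCoeff (w j), stackBias s m (2 * B) w p (ridgeThreshold N Q m nq B C),
    fun j => filterSupp_intCoeff (hw j), fun j _ hjp _ _ _ _ _ _ => by simp [stackBias, hjp.ne],
    fun x hx => ?_⟩
  obtain ⟨V, hVdeg, hVcoeff, hVM⟩ := exists_input_poly hm hB.le fun k hk => hbd k hk x hx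
  simp only [hVcoeff, convStack_stackBias (by omega) hw hVdeg hVM hp, hwp]
  refine ⟨fun j hj hjQ k hk => ?_, fun i _ hi => ?_⟩
  · have hkm : k < m := by omega
    rw [coeff_comb_mul (by omega) hkm hVdeg, ridgeThreshold_of_target B C hj hjQ hk hkm,
      ← congrFun hVcoeff k, if_pos hkm]
    congr 1
    ring
  · rw [ridgeThreshold_of_not_target B C hi]
    exact relu_of_nonpos (by linarith [(abs_le.mp (abs_coeff_mul_le (comb Q m) hVM i)).2])

/-- Lemma 5: a group of convolutional layers produces the ridge functions
`σ(ξ_k·x − t_j)`. -/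
theorem dcnn_ridge_functions
    (d s N m nq : ℕ) (hs : 2 ≤ s) (hsd : s ≤ d) (hN : 1 ≤ N)
    (hnq : nq ≤ m - 1) (hm : 1 ≤ m)
    (Ω : Set (EuclideanSpace ℝ (Fin d))) (hΩ : Ω ⊆ Metric.closedBall 0 1)
    (ξ : ℕ → EuclideanSpace ℝ (Fin d)) (B : ℝ) (hB : 0 < B)
    (hbd : ∀ k < m, ∀ x ∈ Ω, |∑ i, ξ k i * x i| ≤ B) :
    ∃ (u : ℕ → ℤ → ℝ) (b : ℕ → ℕ → ℝ),
      (∀ j, FilterSupp s (u j)) ∧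
      (∀ j, 1 ≤ j → j < ceilDiv' ((2 * N + 3) * m) (s - 1) →
        ∀ i1 i2, s ≤ i1 → i1 < m + (j - 1) * s → s ≤ i2 → i2 < m + (j - 1) * s →
          b j i1 = b j i2) ∧
      ∀ x ∈ Ω,
        (∀ j, 1 ≤ j → j ≤ 2 * N + 3 → ∀ k < nq,
          convStack s m u b
              (fun k' => if k' < m then (∑ i, ξ k' i * x i) + B else 0)
              (ceilDiv' ((2 * N + 3) * m) (s - 1)) ((j - 1) * m + k) =
            relu ((∑ i, ξ k i * x i) - knot N j)) ∧
        (∀ i' < m + ceilDiv' ((2 * N + 3) * m) (s - 1) * s,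
          (¬ ∃ j k, 1 ≤ j ∧ j ≤ 2 * N + 3 ∧ k < nq ∧ i' = (j - 1) * m + k) →
            convStack s m u b
                (fun k' => if k' < m then (∑ i, ξ k' i * x i) + B else 0)
                (ceilDiv' ((2 * N + 3) * m) (s - 1)) i' = 0) :=
  dcnn_ridge_functions_general d s N m nq hs hnq hm Ω ξ B hB hbd
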